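/- arXiv:1805.09887 — 2 statements merged into one kernel-verified Lean document; each statement's English description precedes it below -/
import Mathlib

section
/- Let I be an instance of SPA-ST and let M be a matching in I. Then M is super-stable in I if and only if M is a stable matching in every instance of SPA-S obtained from I by breaking the ties. -/
open scoped Classical

/-- An instance of the Student-Project Allocation problem with lecturer
preferences over students, with Ties (SPA-ST).  `sPref s p q` means student `s`
ranks project `p` at least as highly as project `q` (`p ⪰_s q`); `lPref k t t'`
means lecturer `k` ranks student `t` at least as highly as student `t'`. -/
structure SPAST (S P L : Type) [Fintype S] [Fintype P] [Fintype L]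
    [DecidableEq S] [DecidableEq P] [DecidableEq L] where
  /-- the lecturer offering each project -/
  lec : P → L
  /-- project capacities -/
  c : P → ℕ
  /-- lecturer capacities -/
  d : L → ℕ
  cpos : ∀ p : P, 0 < c p
  dpos : ∀ k : L, 0 < d k
  /-- the set of projects acceptable to each student -/
  acc : S → Finset P
  sPref : S → P → P → Prop
  lPref : L → S → S → Prop
  sRefl : ∀ s : S, ∀ p ∈ acc s, sPref s p p
  sTrans : ∀ s : S, ∀ p ∈ acc s, ∀ q ∈ acc s, ∀ r ∈ acc s,
    sPref s p q → sPref s q r → sPref s p r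
  sTotal : ∀ s : S, ∀ p ∈ acc s, ∀ q ∈ acc s, sPref s p q ∨ sPref s q p
  lRefl : ∀ k : L, ∀ t : S, (∃ p ∈ acc t, lec p = k) → lPref k t t
  lTrans : ∀ k : L, ∀ t1 t2 t3 : S,
    (∃ p ∈ acc t1, lec p = k) → (∃ p ∈ acc t2, lec p = k) → (∃ p ∈ acc t3, lec p = k) →
    lPref k t1 t2 → lPref k t2 t3 → lPref k t1 t3
  lTotal : ∀ k : L, ∀ t1 t2 : S,
    (∃ p ∈ acc t1, lec p = k) → (∃ p ∈ acc t2, lec p = k) →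
    lPref k t1 t2 ∨ lPref k t2 t1
  capLB : ∀ p : P, c p ≤ d (lec p)
  capUB : ∀ k : L, d k ≤ ∑ p ∈ Finset.univ.filter (fun p => lec p = k), c p

namespace SPAST

variable {S P L : Type} [Fintype S] [Fintype P] [Fintype L]
  [DecidableEq S] [DecidableEq P] [DecidableEq L]

/-- `M` is a matching: pairs are acceptable, each student is matched at most once,
and project and lecturer capacities are respected. -/
def IsMatching (I : SPAST S P L) (M : Finset (S × P)) : Prop :=
  (∀ x ∈ M, x.2 ∈ I.acc x.1) ∧
  (∀ s : S, ∀ p q : P, (s, p) ∈ M → (s, q) ∈ M → p = q) ∧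
  (∀ p : P, (M.filter (fun x => x.2 = p)).card ≤ I.c p) ∧
  (∀ k : L, (M.filter (fun x => I.lec x.2 = k)).card ≤ I.d k)

/-- The set `M(p)` of students assigned to project `p` in `M`. -/
def projAsg (M : Finset (S × P)) (p : P) : Finset S :=
  (M.filter (fun x => x.2 = p)).image Prod.fst

/-- The set `M(l_k)` of students assigned to lecturer `k` in `M`. -/
def lecAsg (I : SPAST S P L) (M : Finset (S × P)) (k : L) : Finset S :=
  (M.filter (fun x => I.lec x.2 = k)).image Prod.fst

/-- `t` is a least-preferred (worst) student of lecturer `k` in the set `T`. -/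
def WorstIn (I : SPAST S P L) (k : L) (T : Finset S) (t : S) : Prop :=
  t ∈ T ∧ ∀ t' ∈ T, I.lPref k t' t

/-- `(s, p)` is a super-blocking pair for `M`. -/
def SuperBlocking (I : SPAST S P L) (M : Finset (S × P)) (s : S) (p : P) : Prop :=
  p ∈ I.acc s ∧ (s, p) ∉ M ∧
  (∀ q : P, (s, q) ∈ M → ¬(I.sPref s q p ∧ ¬I.sPref s p q)) ∧
  (((projAsg M p).card < I.c p ∧ (lecAsg I M (I.lec p)).card < I.d (I.lec p)) ∨
   ((projAsg M p).card < I.c p ∧ (lecAsg I M (I.lec p)).card = I.d (I.lec p) ∧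
     (s ∈ lecAsg I M (I.lec p) ∨
      ∃ t : S, WorstIn I (I.lec p) (lecAsg I M (I.lec p)) t ∧ I.lPref (I.lec p) s t)) ∨
   ((projAsg M p).card = I.c p ∧
     ∃ t : S, WorstIn I (I.lec p) (projAsg M p) t ∧ I.lPref (I.lec p) s t))

/-- `(s, p)` is a weakly-blocking pair for `M`. -/
def WeakBlocking (I : SPAST S P L) (M : Finset (S × P)) (s : S) (p : P) : Prop :=
  p ∈ I.acc s ∧ (s, p) ∉ M ∧
  (∀ q : P, (s, q) ∈ M → I.sPref s p q ∧ ¬I.sPref s q p) ∧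
  (((projAsg M p).card < I.c p ∧ (lecAsg I M (I.lec p)).card < I.d (I.lec p)) ∨
   ((projAsg M p).card < I.c p ∧ (lecAsg I M (I.lec p)).card = I.d (I.lec p) ∧
     (s ∈ lecAsg I M (I.lec p) ∨
      ∃ t : S, WorstIn I (I.lec p) (lecAsg I M (I.lec p)) t ∧
        (I.lPref (I.lec p) s t ∧ ¬I.lPref (I.lec p) t s))) ∨
   ((projAsg M p).card = I.c p ∧
     ∃ t : S, WorstIn I (I.lec p) (projAsg M p) t ∧
       (I.lPref (I.lec p) s t ∧ ¬I.lPref (I.lec p) t s)))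

/-- `M` is a super-stable matching in `I`. -/
def SuperStable (I : SPAST S P L) (M : Finset (S × P)) : Prop :=
  I.IsMatching M ∧ ∀ (s : S) (p : P), ¬SuperBlocking I M s p

/-- `M` is a weakly stable matching in `I`. -/
def WeaklyStable (I : SPAST S P L) (M : Finset (S × P)) : Prop :=
  I.IsMatching M ∧ ∀ (s : S) (p : P), ¬WeakBlocking I M s p

/-- `I` is an SPA-S instance: all preference lists are strictly ordered
(the preorders are antisymmetric). -/
def StrictPrefs (I : SPAST S P L) : Prop :=
  (∀ s : S, ∀ p ∈ I.acc s, ∀ q ∈ I.acc s, I.sPref s p q → I.sPref s q p → p = q) ∧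
  (∀ k : L, ∀ t t' : S, (∃ p ∈ I.acc t, I.lec p = k) → (∃ p ∈ I.acc t', I.lec p = k) →
    I.lPref k t t' → I.lPref k t' t → t = t')

/-- `I'` is an SPA-S instance obtained from `I` by breaking the ties. -/
def TieBreaking (I I' : SPAST S P L) : Prop :=
  I'.lec = I.lec ∧ I'.c = I.c ∧ I'.d = I.d ∧ I'.acc = I.acc ∧
  StrictPrefs I' ∧
  (∀ (s : S) (p q : P), I.sPref s p q → ¬I.sPref s q p →
    I'.sPref s p q ∧ ¬I'.sPref s q p) ∧
  (∀ (k : L) (t t' : S), I.lPref k t t' → ¬I.lPref k t' t →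
    I'.lPref k t t' ∧ ¬I'.lPref k t' t)

end SPAST

/-!
A super-blocking pair is exactly a pair that weakly blocks in *some* tie-breaking. A strict
preference in a tie-breaking can only come from a weak preference in `I`, so every
weakly-blocking pair of a tie-breaking is super-blocking in `I`. Conversely, for a
super-blocking pair `(s, p)`, break every tie in favour of `p` (for the students) and of `s`
(for the lecturers): each weak inequality in the super-blocking condition becomes strict, so
`(s, p)` weakly blocks in that tie-breaking.
-/

section TieBreak

variable {α : Type*} {r : α → α → Prop} {D : Set α}

/-- The refinement of `r` that breaks its ties by the key `f`, smaller keys ranking higher. -/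
def tieBreak (r : α → α → Prop) (f : α → ℕ) (a b : α) : Prop :=
  r a b ∧ (r b a → f a ≤ f b)

variable {f : α → ℕ} {a b c : α}

lemma tieBreak_refl (h : r a a) : tieBreak r f a a :=
  ⟨h, fun _ => le_rfl⟩

lemma tieBreak_total (h : r a b ∨ r b a) : tieBreak r f a b ∨ tieBreak r f b a := by
  by_cases hab : r a b <;> by_cases hba : r b a
  · rcases le_total (f a) (f b) with hf | hf
    exacts [Or.inl ⟨hab, fun _ => hf⟩, Or.inr ⟨hba, fun _ => hf⟩]
  · exact Or.inl ⟨hab, fun h' => absurd h' hba⟩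
  · exact Or.inr ⟨hba, fun h' => absurd h' hab⟩
  · tauto

lemma tieBreak_trans (htrans : ∀ a ∈ D, ∀ b ∈ D, ∀ c ∈ D, r a b → r b c → r a c)
    (ha : a ∈ D) (hb : b ∈ D) (hc : c ∈ D) (hab : tieBreak r f a b) (hbc : tieBreak r f b c) :
    tieBreak r f a c :=
  ⟨htrans a ha b hb c hc hab.1 hbc.1, fun hca =>
    (hab.2 (htrans b hb c hc a ha hbc.1 hca)).trans (hbc.2 (htrans c hc a ha b hb hca hab.1))⟩

lemma tieBreak_antisymm (hf : Function.Injective f) (hab : tieBreak r f a b)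
    (hba : tieBreak r f b a) : a = b :=
  hf ((hab.2 hba.1).antisymm (hba.2 hab.1))

lemma tieBreak_strict (hab : r a b) (hba : ¬r b a) :
    tieBreak r f a b ∧ ¬tieBreak r f b a :=
  ⟨⟨hab, fun h => absurd h hba⟩, fun h => hba h.1⟩

noncomputable def priorityKey [Fintype α] [DecidableEq α] (a : α) (x : α) : ℕ :=
  if x = a then 0 else Fintype.equivFin α x + 1

lemma priorityKey_injective [Fintype α] [DecidableEq α] (a : α) :
    Function.Injective (priorityKey a) := by
  intro x y h
  unfold priorityKey at h
  split_ifs at h with hx hy hy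
  · rw [hx, hy]
  · exact (Fintype.equivFin α).injective (Fin.val_injective (Nat.succ_injective h))

lemma tieBreak_priorityKey_of_rel [Fintype α] [DecidableEq α] (hab : r a b) :
    tieBreak r (priorityKey a) a b :=
  ⟨hab, fun _ => by simp [priorityKey]⟩

lemma tieBreak_priorityKey_strict [Fintype α] [DecidableEq α] (hab : r a b) (hne : b ≠ a) :
    tieBreak r (priorityKey a) a b ∧ ¬tieBreak r (priorityKey a) b a :=
  ⟨tieBreak_priorityKey_of_rel hab, fun h => by simpa [priorityKey, hne] using h.2 hab⟩

end TieBreak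

section Worst

variable {α : Type*} {r : α → α → Prop} {D : Set α}

lemma exists_worst (htot : ∀ a ∈ D, ∀ b ∈ D, r a b ∨ r b a)
    (htrans : ∀ a ∈ D, ∀ b ∈ D, ∀ c ∈ D, r a b → r b c → r a c)
    {T : Finset α} (hT : ↑T ⊆ D) (hne : T.Nonempty) : ∃ w ∈ T, ∀ x ∈ T, r x w := by
  induction T using Finset.induction_on with
  | empty => simp at hne
  | insert a T _ ih =>
    have ha : a ∈ D := hT (by simp)
    have hTD : ↑T ⊆ D := fun x hx => hT (by simp_all)
    have haa : r a a := (htot a ha a ha).elim id id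
    rcases T.eq_empty_or_nonempty with rfl | hTne
    · exact ⟨a, by simp, by simpa using haa⟩
    obtain ⟨w, hw, hwT⟩ := ih hTD hTne
    rcases htot a ha w (hTD hw) with haw | hwa
    · exact ⟨w, by simp [hw], by simpa [haw] using hwT⟩
    · have hTa : ∀ x ∈ T, r x a := fun x hx =>
        htrans x (hTD hx) w (hTD hw) a ha (hwT x hx) hwa
      exact ⟨a, by simp, by simpa [haa] using hTa⟩

lemma exists_worst_of_rel (htot : ∀ a ∈ D, ∀ b ∈ D, r a b ∨ r b a)
    (htrans : ∀ a ∈ D, ∀ b ∈ D, ∀ c ∈ D, r a b → r b c → r a c)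
    {T : Finset α} (hT : ↑T ⊆ D) {s t : α} (hs : s ∈ D) (ht : t ∈ T) (hst : r s t) :
    ∃ w, (w ∈ T ∧ ∀ x ∈ T, r x w) ∧ r s w := by
  obtain ⟨w, hw, hwT⟩ := exists_worst htot htrans hT ⟨t, ht⟩
  exact ⟨w, ⟨hw, hwT⟩, htrans s hs t (hT ht) w (hT hw) hst (hwT t ht)⟩

end Worst

namespace SPAST

lemma mem_projAsg {S P : Type} [DecidableEq S] [DecidableEq P] {M : Finset (S × P)} {x : S}
    {p : P} : x ∈ projAsg M p ↔ (x, p) ∈ M := by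
  simp [projAsg]

variable {S P L : Type} [Fintype S] [Fintype P] [Fintype L]
  [DecidableEq S] [DecidableEq P] [DecidableEq L]

/-- The set on which `lPref k` is a total preorder. -/
def applicants (I : SPAST S P L) (k : L) : Set S :=
  {t | ∃ p ∈ I.acc t, I.lec p = k}

variable {I I' : SPAST S P L} {M : Finset (S × P)}

lemma lPref_total_on (I : SPAST S P L) (k : L) :
    ∀ a ∈ I.applicants k, ∀ b ∈ I.applicants k, I.lPref k a b ∨ I.lPref k b a :=
  fun a ha b hb => I.lTotal k a b ha hb

lemma lPref_trans_on (I : SPAST S P L) (k : L) :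
    ∀ a ∈ I.applicants k, ∀ b ∈ I.applicants k, ∀ c ∈ I.applicants k,
      I.lPref k a b → I.lPref k b c → I.lPref k a c :=
  fun a ha b hb c hc => I.lTrans k a b c ha hb hc

lemma mem_lecAsg {x : S} {k : L} : x ∈ lecAsg I M k ↔ ∃ q, (x, q) ∈ M ∧ I.lec q = k := by
  simp [lecAsg]

lemma IsMatching.projAsg_subset_applicants (hM : I.IsMatching M) (p : P) :
    ↑(projAsg M p) ⊆ I.applicants (I.lec p) :=
  fun _ hx => ⟨p, hM.1 _ (mem_projAsg.1 (Finset.mem_coe.1 hx)), rfl⟩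

lemma IsMatching.lecAsg_subset_applicants (hM : I.IsMatching M) (k : L) :
    ↑(lecAsg I M k) ⊆ I.applicants k := fun _ hx => by
  obtain ⟨q, hq, rfl⟩ := mem_lecAsg.1 hx
  exact ⟨q, hM.1 _ hq, rfl⟩

/-- The tie-breaking of `I` in which every student puts `p` first within its tie, and every
lecturer puts `s` first within its tie. -/
noncomputable def breakTies (I : SPAST S P L) (s : S) (p : P) : SPAST S P L where
  lec := I.lec
  c := I.c
  d := I.d
  cpos := I.cpos
  dpos := I.dpos
  acc := I.acc
  sPref s' := tieBreak (I.sPref s') (priorityKey p)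
  lPref k := tieBreak (I.lPref k) (priorityKey s)
  sRefl s' q hq := tieBreak_refl (I.sRefl s' q hq)
  sTrans s' _ ha _ hb _ hc := tieBreak_trans (D := ↑(I.acc s')) (I.sTrans s') ha hb hc
  sTotal s' a ha b hb := tieBreak_total (I.sTotal s' a ha b hb)
  lRefl k t ht := tieBreak_refl (I.lRefl k t ht)
  lTrans k _ _ _ ha hb hc := tieBreak_trans (I.lPref_trans_on k) ha hb hc
  lTotal k a b ha hb := tieBreak_total (I.lTotal k a b ha hb)
  capLB := I.capLB
  capUB := I.capUB

lemma tieBreaking_breakTies (I : SPAST S P L) (s : S) (p : P) :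
    TieBreaking I (I.breakTies s p) :=
  ⟨rfl, rfl, rfl, rfl,
    ⟨fun _ _ _ _ _ => tieBreak_antisymm (priorityKey_injective p),
      fun _ _ _ _ _ => tieBreak_antisymm (priorityKey_injective s)⟩,
    fun _ _ _ => tieBreak_strict, fun _ _ _ => tieBreak_strict⟩

lemma IsMatching.of_tieBreaking (hM : I.IsMatching M) (hI' : TieBreaking I I') :
    I'.IsMatching M := by
  obtain ⟨hlec, hc, hd, hacc, -⟩ := hI'
  obtain ⟨hMacc, hMfun, hMc, hMd⟩ := hM
  exact ⟨by rwa [hacc], hMfun, by rwa [hc], by rwa [hd, hlec]⟩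

lemma exists_worstIn_of_tieBreaking (hI' : TieBreaking I I') {k : L} {T : Finset S}
    (hT : ↑T ⊆ I.applicants k) {s : S} (hs : s ∈ I.applicants k)
    (h : ∃ t, WorstIn I' k T t ∧ I'.lPref k s t ∧ ¬I'.lPref k t s) :
    ∃ t, WorstIn I k T t ∧ I.lPref k s t := by
  obtain ⟨-, -, -, -, -, -, hlPref⟩ := hI'
  obtain ⟨t, ⟨ht, -⟩, hst', -⟩ := h
  have hst : I.lPref k s t := by
    by_contra hst
    have hts := (I.lTotal k s t hs (hT ht)).resolve_left hst
    exact (hlPref k t s hts hst).2 hst'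
  exact exists_worst_of_rel (I.lPref_total_on k) (I.lPref_trans_on k) hT hs ht hst

lemma exists_worstIn_breakTies {k : L} {T : Finset S} (hT : ↑T ⊆ I.applicants k) {s : S}
    (hs : s ∈ I.applicants k) (hsT : s ∉ T) (p : P)
    (h : ∃ t, WorstIn I k T t ∧ I.lPref k s t) :
    ∃ t, WorstIn (I.breakTies s p) k T t ∧
      (I.breakTies s p).lPref k s t ∧ ¬(I.breakTies s p).lPref k t s := by
  obtain ⟨t, ⟨ht, -⟩, hst⟩ := h
  obtain ⟨w, hw, hsw⟩ := exists_worst_of_rel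
    (fun a ha b hb => tieBreak_total (I.lPref_total_on k a ha b hb))
    (fun a ha b hb c hc => tieBreak_trans (I.lPref_trans_on k) ha hb hc) hT hs ht
    (tieBreak_priorityKey_of_rel hst)
  exact ⟨w, hw, tieBreak_priorityKey_strict hsw.1 fun hws => hsT (hws ▸ hw.1)⟩

lemma superBlocking_of_weakBlocking (hM : I.IsMatching M) (hI' : TieBreaking I I') {s : S}
    {p : P} (h : WeakBlocking I' M s p) : SuperBlocking I M s p := by
  obtain ⟨hp, hnm, hstud, hcap⟩ := h
  have ⟨hlec, hc, hd, hacc, _, hsPref, _⟩ := hI'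
  have hlecAsg : lecAsg I' M = lecAsg I M := by
    funext k
    simp only [lecAsg, hlec]
  rw [hacc] at hp
  rw [hlec, hc, hd, hlecAsg] at hcap
  have hs : s ∈ I.applicants (I.lec p) := ⟨p, hp, rfl⟩
  refine ⟨hp, hnm, fun q hq hqp => (hstud q hq).2 (hsPref s q p hqp.1 hqp.2).1, ?_⟩
  rcases hcap with h | ⟨hpc, hkc, hsk | hw⟩ | ⟨hpc, hw⟩
  · exact Or.inl h
  · exact Or.inr (Or.inl ⟨hpc, hkc, Or.inl hsk⟩)
  · exact Or.inr (Or.inl ⟨hpc, hkc, Or.inr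
      (exists_worstIn_of_tieBreaking hI' (hM.lecAsg_subset_applicants _) hs hw)⟩)
  · exact Or.inr (Or.inr ⟨hpc,
      exists_worstIn_of_tieBreaking hI' (hM.projAsg_subset_applicants p) hs hw⟩)

lemma weakBlocking_breakTies (hM : I.IsMatching M) {s : S} {p : P}
    (h : SuperBlocking I M s p) : WeakBlocking (I.breakTies s p) M s p := by
  obtain ⟨hp, hnm, hstud, hcap⟩ := h
  have hs : s ∈ I.applicants (I.lec p) := ⟨p, hp, rfl⟩
  refine ⟨hp, hnm, fun q hq => ?_, ?_⟩
  · have hpq : I.sPref s p q := by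
      have := hstud q hq
      have := I.sTotal s p hp q (hM.1 _ hq)
      tauto
    exact tieBreak_priorityKey_strict hpq fun hqp => hnm (hqp ▸ hq)
  rcases hcap with h | ⟨hpc, hkc, hsk | hw⟩ | ⟨hpc, hw⟩
  · exact Or.inl h
  · exact Or.inr (Or.inl ⟨hpc, hkc, Or.inl hsk⟩)
  · by_cases hsk : s ∈ lecAsg I M (I.lec p)
    · exact Or.inr (Or.inl ⟨hpc, hkc, Or.inl hsk⟩)
    · exact Or.inr (Or.inl ⟨hpc, hkc, Or.inr
        (exists_worstIn_breakTies (hM.lecAsg_subset_applicants _) hs hsk p hw)⟩)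
  · exact Or.inr (Or.inr ⟨hpc, exists_worstIn_breakTies (hM.projAsg_subset_applicants p) hs
      (fun hsp => hnm (mem_projAsg.1 hsp)) p hw⟩)

end SPAST

open SPAST in
theorem super_stable_iff_stable_in_every_tie_breaking {S P L : Type} [Fintype S] [Fintype P] [Fintype L]
    [DecidableEq S] [DecidableEq P] [DecidableEq L]
    (I : SPAST S P L) (M : Finset (S × P)) (hM : I.IsMatching M) :
    SuperStable I M ↔
      ∀ I' : SPAST S P L, TieBreaking I I' → WeaklyStable I' M := by
  constructor
  · rintro ⟨-, hsuper⟩ I' hI'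
    exact ⟨hM.of_tieBreaking hI',
      fun s p hweak => hsuper s p (superBlocking_of_weakBlocking hM hI' hweak)⟩
  · intro hstable
    exact ⟨hM, fun s p hsuper =>
      (hstable _ (tieBreaking_breakTies I s p)).2 s p (weakBlocking_breakTies hM hsuper)⟩
end

section
/- Let I be an instance of SPA-ST that admits a super-stable matching M. Then every weakly stable matching in I has cardinality |M|. -/
open scoped Classical

/-!
Let `M` be super-stable and `M'` weakly stable, and call a student *loyal* if it strictly prefers
its `M`-project to its `M'`-project (being unmatched in `M'` counting as worst). A pair of `M' \ M`
with a disloyal student would block `M` unless its project or its lecturer is full in `M` with all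
occupants strictly preferred to the student; a pair of `M \ M'` with a loyal student is kept out of
`M'` in the same way by occupants ranked at least as high. These two dominations can never meet at
one lecturer, and counting lecturer by lecturer (project by project below lecturers that are not
full in this way) shows that `M' \ M` has at most as many disloyal pairs as `M \ M'`. Each disloyal
pair of `M \ M'` yields one of `M' \ M` whose student is matched in `M`, so every student matched
in `M'` is matched in `M`. The situation is symmetric under exchanging `M`, `M'` and the two kinds
of students, so `M` and `M'` match the same students.
-/

open Finset

namespace Finset

variable {α β : Type*}

theorem exists_forall_rel_of_total (r : α → α → Prop) {T : Finset α} (hT : T.Nonempty)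
    (htotal : ∀ a ∈ T, ∀ b ∈ T, r a b ∨ r b a)
    (htrans : ∀ a ∈ T, ∀ b ∈ T, ∀ c ∈ T, r a b → r b c → r a c) :
    ∃ b ∈ T, ∀ a ∈ T, r a b := by
  induction hT using Finset.Nonempty.cons_induction with
  | singleton a =>
    refine ⟨a, mem_singleton_self a, fun x hx => ?_⟩
    rw [mem_singleton.1 hx]
    exact (htotal a (mem_singleton_self a) a (mem_singleton_self a)).elim id id
  | cons a T ha hT ih =>
    obtain ⟨b, hb, hbT⟩ := ih
      (fun x hx y hy => htotal x (mem_cons_of_mem hx) y (mem_cons_of_mem hy))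
      (fun x hx y hy z hz => htrans x (mem_cons_of_mem hx) y (mem_cons_of_mem hy) z
        (mem_cons_of_mem hz))
    rcases htotal a (mem_cons_self a T) b (mem_cons_of_mem hb) with hab | hba
    · refine ⟨b, mem_cons_of_mem hb, fun x hx => ?_⟩
      rcases mem_cons.1 hx with rfl | hx
      · exact hab
      · exact hbT x hx
    · refine ⟨a, mem_cons_self a T, fun x hx => ?_⟩
      rcases mem_cons.1 hx with rfl | hx
      · exact (htotal x hx x hx).elim id id
      · exact htrans x (mem_cons_of_mem hx) b (mem_cons_of_mem hb) a (mem_cons_self a T)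
          (hbT x hx) hba

theorem card_filter_sdiff_le_of_card_filter_le [DecidableEq α] {s t : Finset α} {p : α → Prop}
    [DecidablePred p] (h : #(t.filter p) ≤ #(s.filter p)) :
    #((t \ s).filter p) ≤ #((s \ t).filter p) := by
  have filter_sdiff : ∀ u v : Finset α, (u \ v).filter p = u.filter p \ v.filter p := by
    intro u v; ext; simp only [mem_filter, mem_sdiff]; tauto
  rw [filter_sdiff, filter_sdiff]
  exact card_sdiff_le_card_sdiff_iff.2 h

theorem card_le_card_of_forall_card_filter_le [Fintype β] [DecidableEq β] {s t : Finset α}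
    (f : α → β) (h : ∀ b, #(s.filter (f · = b)) ≤ #(t.filter (f · = b))) : #s ≤ #t := by
  rw [card_eq_sum_card_fiberwise (f := f) (t := univ) fun _ _ => mem_univ _,
    card_eq_sum_card_fiberwise (f := f) (t := univ) fun _ _ => mem_univ _]
  exact sum_le_sum fun b _ => h b

end Finset

namespace SPAST

theorem card_projAsg {S P : Type} [DecidableEq S] [DecidableEq P] (M : Finset (S × P)) (p : P) :
    #(projAsg M p) = #(M.filter (·.2 = p)) :=
  card_image_of_injOn fun _ hx _ hy h =>
    Prod.ext h ((mem_filter.1 hx).2.trans (mem_filter.1 hy).2.symm)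

variable {S P L : Type} [Fintype S] [Fintype P] [Fintype L]
  [DecidableEq S] [DecidableEq P] [DecidableEq L] {I : SPAST S P L}

/-- The students over which the preorder `I.lPref k` is defined. -/
def Ranks (I : SPAST S P L) (k : L) (t : S) : Prop :=
  ∃ p ∈ I.acc t, I.lec p = k

def lStrict (I : SPAST S P L) (k : L) (t t' : S) : Prop :=
  I.lPref k t t' ∧ ¬I.lPref k t' t

def sStrict (I : SPAST S P L) (s : S) (p q : P) : Prop :=
  I.sPref s p q ∧ ¬I.sPref s q p

/-- The capacity clause shared by super- and weakly-blocking pairs, with `R` the comparison of `s`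
against a worst occupant. -/
def PlaceBlocks (I : SPAST S P L) (M : Finset (S × P)) (R : L → S → S → Prop) (s : S) (p : P) :
    Prop :=
  ((projAsg M p).card < I.c p ∧ (lecAsg I M (I.lec p)).card < I.d (I.lec p)) ∨
   ((projAsg M p).card < I.c p ∧ (lecAsg I M (I.lec p)).card = I.d (I.lec p) ∧
     (s ∈ lecAsg I M (I.lec p) ∨
      ∃ t : S, WorstIn I (I.lec p) (lecAsg I M (I.lec p)) t ∧ R (I.lec p) s t)) ∨
   ((projAsg M p).card = I.c p ∧
     ∃ t : S, WorstIn I (I.lec p) (projAsg M p) t ∧ R (I.lec p) s t)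

def ProjShutOut (I : SPAST S P L) (N : Finset (S × P)) (D : L → S → S → Prop) (s : S) (p : P) :
    Prop :=
  #(N.filter (·.2 = p)) = I.c p ∧ ∀ y ∈ N.filter (·.2 = p), D (I.lec p) y.1 s

def LecShutOut (I : SPAST S P L) (N : Finset (S × P)) (D : L → S → S → Prop) (s : S) (k : L) :
    Prop :=
  #(N.filter (I.lec ·.2 = k)) = I.d k ∧ ∀ y ∈ N.filter (I.lec ·.2 = k), D k y.1 s

def ShutOut (I : SPAST S P L) (N : Finset (S × P)) (D : L → S → S → Prop) (s : S) (p : P) :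
    Prop :=
  ProjShutOut I N D s p ∨ LecShutOut I N D s (I.lec p)

theorem ShutOut.dominated {N : Finset (S × P)} {D : L → S → S → Prop} {s : S} {p : P}
    (h : ShutOut I N D s p) {y : S × P} (hy : y ∈ N) (hyp : y.2 = p) : D (I.lec p) y.1 s :=
  h.elim (fun h => h.2 y (mem_filter.2 ⟨hy, hyp⟩)) fun h => h.2 y (mem_filter.2 ⟨hy, by rw [hyp]⟩)

section Matching

variable {M : Finset (S × P)}

theorem IsMatching.injOn_fst (hM : I.IsMatching M) : Set.InjOn Prod.fst (M : Set (S × P)) :=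
  fun x hx y hy h => Prod.ext h (hM.2.1 x.1 x.2 y.2 hx (by rw [h]; exact hy))

theorem IsMatching.card_lecAsg (hM : I.IsMatching M) (k : L) :
    #(lecAsg I M k) = #(M.filter (I.lec ·.2 = k)) :=
  card_image_of_injOn (hM.injOn_fst.mono (filter_subset _ _))

theorem IsMatching.ranks_of_mem_projAsg (hM : I.IsMatching M) {p : P} {t : S}
    (ht : t ∈ projAsg M p) : I.Ranks (I.lec p) t := by
  obtain ⟨x, hx, rfl⟩ := mem_image.1 ht
  obtain ⟨hxM, rfl⟩ := mem_filter.1 hx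
  exact ⟨x.2, hM.1 x hxM, rfl⟩

theorem IsMatching.ranks_of_mem_lecAsg (hM : I.IsMatching M) {k : L} {t : S}
    (ht : t ∈ lecAsg I M k) : I.Ranks k t := by
  obtain ⟨x, hx, rfl⟩ := mem_image.1 ht
  obtain ⟨hxM, rfl⟩ := mem_filter.1 hx
  exact ⟨x.2, hM.1 x hxM, rfl⟩

end Matching

theorem exists_worstIn {k : L} {T : Finset S} (hT : T.Nonempty) (hrank : ∀ t ∈ T, I.Ranks k t) :
    ∃ t, WorstIn I k T t := by
  obtain ⟨t, ht, hworst⟩ := T.exists_forall_rel_of_total (I.lPref k) hT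
    (fun a ha b hb => I.lTotal k a b (hrank a ha) (hrank b hb))
    (fun a ha b hb c hc => I.lTrans k a b c (hrank a ha) (hrank b hb) (hrank c hc))
  exact ⟨t, ht, hworst⟩

theorem lStrict_of_not_lPref {k : L} {s t₀ t : S} (hs : I.Ranks k s) (ht₀ : I.Ranks k t₀)
    (ht : I.Ranks k t) (hst₀ : ¬I.lPref k s t₀) (htt₀ : I.lPref k t t₀) : I.lStrict k t s :=
  have ht₀s : I.lPref k t₀ s := (I.lTotal k s t₀ hs ht₀).resolve_left hst₀
  ⟨I.lTrans k t t₀ s ht ht₀ hs htt₀ ht₀s, fun hst => hst₀ (I.lTrans k s t t₀ hs ht ht₀ hst htt₀)⟩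

theorem lPref_of_not_lStrict {k : L} {s t₀ t : S} (hs : I.Ranks k s) (ht₀ : I.Ranks k t₀)
    (ht : I.Ranks k t) (hst₀ : ¬I.lStrict k s t₀) (htt₀ : I.lPref k t t₀) : I.lPref k t s := by
  have ht₀s : I.lPref k t₀ s := by
    by_contra h
    exact hst₀ ⟨(I.lTotal k t₀ s ht₀ hs).resolve_left h, h⟩
  exact I.lTrans k t t₀ s ht ht₀ hs htt₀ ht₀s

/-- `hRD`: ranking at least as high as a worst occupant `t₀` that `s` does not `R`-beat is enough
to `D`-dominate `s`. -/
theorem shutOut_of_not_placeBlocks {M : Finset (S × P)} (hM : I.IsMatching M)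
    {R D : L → S → S → Prop}
    (hRD : ∀ {k s t₀ t}, I.Ranks k s → I.Ranks k t₀ → I.Ranks k t → ¬R k s t₀ →
      I.lPref k t t₀ → D k t s)
    {s : S} {p : P} (hp : p ∈ I.acc s) (h : ¬PlaceBlocks I M R s p) : ShutOut I M D s p := by
  have dominated : ∀ {T : Finset S}, T.Nonempty → (∀ t ∈ T, I.Ranks (I.lec p) t) →
      (¬∃ t, WorstIn I (I.lec p) T t ∧ R (I.lec p) s t) → ∀ t ∈ T, D (I.lec p) t s := by
    intro T hT hrank hnot t ht
    obtain ⟨t₀, ht₀, hworst⟩ := exists_worstIn hT hrank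
    exact hRD ⟨p, hp, rfl⟩ (hrank t₀ ht₀) (hrank t ht) (fun hR => hnot ⟨t₀, ⟨ht₀, hworst⟩, hR⟩)
      (hworst t ht)
  by_cases hfull : #(projAsg M p) = I.c p
  · refine Or.inl ⟨card_projAsg M p ▸ hfull, fun y hy => ?_⟩
    refine dominated (card_pos.1 (hfull ▸ I.cpos p)) (fun t => hM.ranks_of_mem_projAsg)
      (fun hw => h (Or.inr (Or.inr ⟨hfull, hw⟩))) y.1 (mem_image_of_mem _ hy)
  · have hlt : #(projAsg M p) < I.c p :=
      lt_of_le_of_ne (card_projAsg M p ▸ hM.2.2.1 p) hfull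
    have hlfull : #(lecAsg I M (I.lec p)) = I.d (I.lec p) :=
      le_antisymm (hM.card_lecAsg _ ▸ hM.2.2.2 _) (not_lt.1 fun hlt' => h (Or.inl ⟨hlt, hlt'⟩))
    refine Or.inr ⟨hM.card_lecAsg _ ▸ hlfull, fun y hy => ?_⟩
    refine dominated (card_pos.1 (hlfull ▸ I.dpos _)) (fun t => hM.ranks_of_mem_lecAsg)
      (fun hw => h (Or.inr (Or.inl ⟨hlt, hlfull, Or.inr hw⟩))) y.1 (mem_image_of_mem _ hy)

theorem SuperStable.shutOut {M : Finset (S × P)} (hM : I.SuperStable M) {s : S} {p : P}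
    (hp : p ∈ I.acc s) (hsp : (s, p) ∉ M) (hs : ∀ q, (s, q) ∈ M → ¬I.sStrict s q p) :
    ShutOut I M I.lStrict s p :=
  shutOut_of_not_placeBlocks hM.1 lStrict_of_not_lPref hp fun h => hM.2 s p ⟨hp, hsp, hs, h⟩

theorem WeaklyStable.shutOut {M : Finset (S × P)} (hM : I.WeaklyStable M) {s : S} {p : P}
    (hp : p ∈ I.acc s) (hsp : (s, p) ∉ M) (hs : ∀ q, (s, q) ∈ M → I.sStrict s p q) :
    ShutOut I M I.lPref s p :=
  shutOut_of_not_placeBlocks hM.1 lPref_of_not_lStrict hp fun h => hM.2 s p ⟨hp, hsp, hs, h⟩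

def StrictlyPrefers (I : SPAST S P L) (s : S) (M M' : Finset (S × P)) : Prop :=
  ∃ p, (s, p) ∈ M ∧ ∀ q, (s, q) ∈ M' → I.sStrict s p q

/-- What the counting argument uses of a super-stable `N₁` and a weakly stable `N₂`: `prefers₁`
marks the students loyal to `N₁`, and `D₁`, `D₂` are strict and weak lecturer preference. The
fields are invariant under `swap`. -/
structure Comparison (I : SPAST S P L) where
  N₁ : Finset (S × P)
  N₂ : Finset (S × P)
  D₁ : L → S → S → Prop
  D₂ : L → S → S → Prop
  prefers₁ : S → Prop
  isMatching₁ : I.IsMatching N₁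
  isMatching₂ : I.IsMatching N₂
  not_D₂_of_D₁ : ∀ k t t', D₁ k t t' → ¬D₂ k t' t
  shutOut₁ : ∀ x ∈ N₂ \ N₁, ¬prefers₁ x.1 → ShutOut I N₁ D₁ x.1 x.2
  shutOut₂ : ∀ x ∈ N₁ \ N₂, prefers₁ x.1 → ShutOut I N₂ D₂ x.1 x.2
  matched₁ : ∀ x ∈ N₂ \ N₁, prefers₁ x.1 → ∃ q, (x.1, q) ∈ N₁
  matched₂ : ∀ x ∈ N₁ \ N₂, ¬prefers₁ x.1 → ∃ q, (x.1, q) ∈ N₂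

namespace Comparison

variable (C : Comparison I)

def swap : Comparison I where
  N₁ := C.N₂
  N₂ := C.N₁
  D₁ := C.D₂
  D₂ := C.D₁
  prefers₁ s := ¬C.prefers₁ s
  isMatching₁ := C.isMatching₂
  isMatching₂ := C.isMatching₁
  not_D₂_of_D₁ k t t' h h' := C.not_D₂_of_D₁ k t' t h' h
  shutOut₁ x hx h := C.shutOut₂ x hx (not_not.1 h)
  shutOut₂ := C.shutOut₁
  matched₁ := C.matched₂
  matched₂ x hx h := C.matched₁ x hx (not_not.1 h)

/-- The pairs of disloyal students gained, resp. lost, in passing from `N₁` to `N₂`. -/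
noncomputable def entering : Finset (S × P) := (C.N₂ \ C.N₁).filter fun x => ¬C.prefers₁ x.1

noncomputable def leaving : Finset (S × P) := (C.N₁ \ C.N₂).filter fun x => ¬C.prefers₁ x.1

def LecBlocked (k : L) : Prop :=
  ∃ x ∈ C.entering, I.lec x.2 = k ∧ LecShutOut I C.N₁ C.D₁ x.1 k

theorem not_swap_lecBlocked {k : L} (hk : C.LecBlocked k) : ¬C.swap.LecBlocked k := by
  rintro ⟨y, hy, hyk, hyshut⟩
  obtain ⟨x, hx, hxk, hxshut⟩ := hk
  have hy₁ : y ∈ C.N₁ := (mem_sdiff.1 (mem_filter.1 hy).1).1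
  have hx₂ : x ∈ C.N₂ := (mem_sdiff.1 (mem_filter.1 hx).1).1
  exact C.not_D₂_of_D₁ k y.1 x.1 (hxshut.2 y (mem_filter.2 ⟨hy₁, hyk⟩))
    (hyshut.2 x (mem_filter.2 ⟨hx₂, hxk⟩))

/-- A disloyal pair entering at `p` must be shut out at `p` itself, and then every pair leaving
`p` is disloyal too, since a loyal one would be dominated in both directions by that pair. -/
theorem card_entering_filter_proj_le {p : P} (hk : ¬C.LecBlocked (I.lec p)) :
    #(C.entering.filter (·.2 = p)) ≤ #(C.leaving.filter (·.2 = p)) := by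
  rcases (C.entering.filter (·.2 = p)).eq_empty_or_nonempty with hempty | ⟨x, hx⟩
  · simp [hempty]
  obtain ⟨hxE, rfl⟩ := mem_filter.1 hx
  obtain ⟨hxΔ, hxdis⟩ := mem_filter.1 hxE
  have hfull : ProjShutOut I C.N₁ C.D₁ x.1 x.2 :=
    (C.shutOut₁ x hxΔ hxdis).resolve_right fun h => hk ⟨x, hxE, rfl, h⟩
  have hleaving : ∀ y ∈ (C.N₁ \ C.N₂).filter (·.2 = x.2), ¬C.prefers₁ y.1 := by
    intro y hy hyloyal
    obtain ⟨hyΔ, hyp⟩ := mem_filter.1 hy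
    obtain ⟨hy₁, -⟩ := mem_sdiff.1 hyΔ
    have hD₁ : C.D₁ (I.lec x.2) y.1 x.1 := hfull.2 y (mem_filter.2 ⟨hy₁, hyp⟩)
    have hD₂ := (C.shutOut₂ y hyΔ hyloyal).dominated (mem_sdiff.1 hxΔ).1 hyp.symm
    rw [hyp] at hD₂
    exact C.not_D₂_of_D₁ _ _ _ hD₁ hD₂
  calc #(C.entering.filter (·.2 = x.2))
      ≤ #((C.N₂ \ C.N₁).filter (·.2 = x.2)) :=
        card_le_card (filter_subset_filter _ (filter_subset _ _))
    _ ≤ #((C.N₁ \ C.N₂).filter (·.2 = x.2)) :=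
      card_filter_sdiff_le_of_card_filter_le (hfull.1 ▸ C.isMatching₂.2.2.1 x.2)
    _ = #(C.leaving.filter (·.2 = x.2)) := by
      rw [leaving, filter_comm, filter_true_of_mem hleaving]

theorem swap_entering : C.swap.entering = (C.N₁ \ C.N₂).filter fun x => C.prefers₁ x.1 := by
  ext; simp [swap, entering]

theorem swap_leaving : C.swap.leaving = (C.N₂ \ C.N₁).filter fun x => C.prefers₁ x.1 := by
  ext; simp [swap, leaving]

theorem card_entering_filter_lec_le_of_not_lecBlocked {k : L} (hk : ¬C.LecBlocked k) :
    #(C.entering.filter (I.lec ·.2 = k)) ≤ #(C.leaving.filter (I.lec ·.2 = k)) := by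
  refine card_le_card_of_forall_card_filter_le Prod.snd fun p => ?_
  by_cases hp : I.lec p = k
  · subst hp
    have filter_proj : ∀ X : Finset (S × P),
        (X.filter (I.lec ·.2 = I.lec p)).filter (·.2 = p) = X.filter (·.2 = p) := by
      intro X
      rw [filter_filter]
      exact filter_congr fun x _ => ⟨And.right, fun h => ⟨by rw [h], h⟩⟩
    rw [filter_proj, filter_proj]
    exact C.card_entering_filter_proj_le hk
  · have hempty : (C.entering.filter (I.lec ·.2 = k)).filter (·.2 = p) = ∅ :=
      filter_eq_empty_iff.2 fun x hx hxp => hp (hxp ▸ (mem_filter.1 hx).2)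
    simp [hempty]

theorem card_entering_filter_lec_le (k : L) :
    #(C.entering.filter (I.lec ·.2 = k)) ≤ #(C.leaving.filter (I.lec ·.2 = k)) := by
  by_cases hk : C.LecBlocked k
  · -- `k` is full in `N₁`, so all pairs together lose at least as many as they gain at `k`,
    -- while the loyal ones gain at least as many as they lose, by the swapped statement.
    have hloyal := C.swap.card_entering_filter_lec_le_of_not_lecBlocked (C.not_swap_lecBlocked hk)
    rw [swap_entering, swap_leaving] at hloyal
    obtain ⟨_, -, -, hfull⟩ := hk
    have hall : #((C.N₂ \ C.N₁).filter (I.lec ·.2 = k)) ≤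
        #((C.N₁ \ C.N₂).filter (I.lec ·.2 = k)) :=
      card_filter_sdiff_le_of_card_filter_le (hfull.1 ▸ C.isMatching₂.2.2.2 k)
    have split : ∀ X : Finset (S × P), #(X.filter (I.lec ·.2 = k)) =
        #((X.filter fun x => C.prefers₁ x.1).filter (I.lec ·.2 = k)) +
          #((X.filter fun x => ¬C.prefers₁ x.1).filter (I.lec ·.2 = k)) := by
      intro X
      rw [filter_comm, filter_comm (fun x : S × P => ¬C.prefers₁ x.1)]
      exact (card_filter_add_card_filter_not _).symm
    rw [entering, leaving]
    have := split (C.N₁ \ C.N₂)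
    have := split (C.N₂ \ C.N₁)
    omega
  · exact C.card_entering_filter_lec_le_of_not_lecBlocked hk

theorem card_entering_le : #C.entering ≤ #C.leaving :=
  card_le_card_of_forall_card_filter_le (fun x => I.lec x.2) C.card_entering_filter_lec_le

theorem image_fst_leaving_subset :
    C.leaving.image Prod.fst ⊆
      (C.entering.filter fun x => ∃ q, (x.1, q) ∈ C.N₁).image Prod.fst := by
  intro s hs
  obtain ⟨y, hy, rfl⟩ := mem_image.1 hs
  obtain ⟨hyΔ, hydis⟩ := mem_filter.1 hy
  obtain ⟨hy₁, hy₂⟩ := mem_sdiff.1 hyΔ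
  obtain ⟨q, hq⟩ := C.matched₂ y hyΔ hydis
  have hq₁ : (y.1, q) ∉ C.N₁ := fun hq₁ => hy₂ (by rwa [C.isMatching₁.2.1 y.1 q y.2 hq₁ hy₁] at hq)
  exact mem_image.2 ⟨(y.1, q), mem_filter.2 ⟨mem_filter.2 ⟨mem_sdiff.2 ⟨hq, hq₁⟩, hydis⟩,
    y.2, hy₁⟩, rfl⟩

theorem matched₁_of_mem_entering {x : S × P} (hx : x ∈ C.entering) : ∃ q, (x.1, q) ∈ C.N₁ := by
  have hcard : #C.entering ≤ #(C.entering.filter fun x => ∃ q, (x.1, q) ∈ C.N₁) :=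
    calc #C.entering ≤ #C.leaving := C.card_entering_le
      _ = #(C.leaving.image Prod.fst) :=
        (card_image_of_injOn (C.isMatching₁.injOn_fst.mono
          fun _ hy => (mem_sdiff.1 (mem_filter.1 hy).1).1)).symm
      _ ≤ #((C.entering.filter fun x => ∃ q, (x.1, q) ∈ C.N₁).image Prod.fst) :=
        card_le_card C.image_fst_leaving_subset
      _ ≤ _ := card_image_le
  rw [← eq_of_subset_of_card_le (filter_subset _ _) hcard] at hx
  exact (mem_filter.1 hx).2

theorem matched₁_of_mem_N₂ {x : S × P} (hx : x ∈ C.N₂) : ∃ q, (x.1, q) ∈ C.N₁ := by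
  by_cases hx₁ : x ∈ C.N₁
  · exact ⟨x.2, hx₁⟩
  have hxΔ : x ∈ C.N₂ \ C.N₁ := mem_sdiff.2 ⟨hx, hx₁⟩
  by_cases hloyal : C.prefers₁ x.1
  · exact C.matched₁ x hxΔ hloyal
  · exact C.matched₁_of_mem_entering (mem_filter.2 ⟨hxΔ, hloyal⟩)

theorem card_eq : #C.N₁ = #C.N₂ := by
  have himage : C.N₁.image Prod.fst = C.N₂.image Prod.fst := by
    ext s
    simp only [mem_image]
    constructor
    · rintro ⟨x, hx, rfl⟩
      obtain ⟨q, hq⟩ := C.swap.matched₁_of_mem_N₂ hx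
      exact ⟨(x.1, q), hq, rfl⟩
    · rintro ⟨x, hx, rfl⟩
      obtain ⟨q, hq⟩ := C.matched₁_of_mem_N₂ hx
      exact ⟨(x.1, q), hq, rfl⟩
  rw [← card_image_of_injOn C.isMatching₁.injOn_fst, himage,
    card_image_of_injOn C.isMatching₂.injOn_fst]

def ofStable {M M' : Finset (S × P)} (hM : I.SuperStable M) (hM' : I.WeaklyStable M') :
    Comparison I where
  N₁ := M
  N₂ := M'
  D₁ := I.lStrict
  D₂ := I.lPref
  prefers₁ s := I.StrictlyPrefers s M M'
  isMatching₁ := hM.1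
  isMatching₂ := hM'.1
  not_D₂_of_D₁ _ _ _ h := h.2
  shutOut₁ x hx hdis := by
    obtain ⟨hxM', hxM⟩ := mem_sdiff.1 hx
    refine hM.shutOut (hM'.1.1 x hxM') hxM fun q hq hpref => hdis ⟨q, hq, fun q' hq' => ?_⟩
    rwa [hM'.1.2.1 x.1 q' x.2 hq' hxM']
  shutOut₂ x hx hloyal := by
    obtain ⟨hxM, hxM'⟩ := mem_sdiff.1 hx
    obtain ⟨q, hq, hpref⟩ := hloyal
    refine hM'.shutOut (hM.1.1 x hxM) hxM' fun q' hq' => ?_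
    rw [← hM.1.2.1 x.1 q x.2 hq hxM]
    exact hpref q' hq'
  matched₁ _ _ hloyal := hloyal.imp fun _ => And.left
  matched₂ x hx hdis := by
    by_contra hunmatched
    exact hdis ⟨x.2, (mem_sdiff.1 hx).1, fun q hq => absurd ⟨q, hq⟩ hunmatched⟩

end Comparison

end SPAST

open SPAST in
theorem weakly_stable_card_eq_super_stable_card {S P L : Type} [Fintype S] [Fintype P] [Fintype L]
    [DecidableEq S] [DecidableEq P] [DecidableEq L]
    (I : SPAST S P L) (M : Finset (S × P)) (hM : SuperStable I M)
    (M' : Finset (S × P)) (hM' : WeaklyStable I M') :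
    M'.card = M.card :=
  (Comparison.ofStable hM hM').card_eq.symm
end
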